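/- If y₁ and y₂ are both optimal target states for the same initial state x (i.e., both minimize y ↦ W(y) + R(y − x) + K·1{y ≠ x} over Δ(n)), W is convex, R is convex and subadditive, then for every θ ∈ (0,1), the point ȳ = θy₁ + (1−θ)y₂ lies in the no-transfer region: W(ȳ) ≤ W(z) + R(z − ȳ) + K for all z ∈ Δ(n). -/

import Mathlib

/-!
Both optimal targets cost at most `W z + R (z - x) + K` for every `z`, the fixed cost being paid
at most once. The total cost `y ↦ W y + R (y - x)` is convex on Δ(n), so `ȳ = θ y₁ + (1 - θ) y₂`
costs no more than the worse of `y₁, y₂`. Splitting `z - x = (z - ȳ) + (ȳ - x)` by subadditivity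
of `R` then cancels `R (ȳ - x)` on both sides.
-/

/-- The simplex Δ(n). -/
def Delta (N : ℕ) (n : ℝ) : Set (Fin N → ℝ) :=
  {y | (∀ i, 0 ≤ y i) ∧ ∑ i, y i = n}

open Finset

lemma convex_Delta (N : ℕ) (n : ℝ) : Convex ℝ (Delta N n) := by
  intro a ha b hb s t hs ht hst
  refine ⟨fun i => ?_, ?_⟩
  · simp only [Pi.add_apply, Pi.smul_apply, smul_eq_mul]
    exact add_nonneg (mul_nonneg hs (ha.1 i)) (mul_nonneg ht (hb.1 i))
  · simp only [Pi.add_apply, Pi.smul_apply, smul_eq_mul, sum_add_distrib, ← mul_sum, ha.2, hb.2,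
      ← add_mul, hst, one_mul]

lemma sum_sub_eq_zero_of_mem_Delta {N : ℕ} {n : ℝ} {a b : Fin N → ℝ} (ha : a ∈ Delta N n)
    (hb : b ∈ Delta N n) : ∑ i, (a - b) i = 0 := by
  simp only [Pi.sub_apply, sum_sub_distrib, ha.2, hb.2, sub_self]

lemma ConvexOn.comp_sub_const {E : Type*} [AddCommGroup E] [Module ℝ E] {s t : Set E}
    {R : E → ℝ} (hR : ConvexOn ℝ t R) (hs : Convex ℝ s) (x : E) (hst : ∀ y ∈ s, y - x ∈ t) :
    ConvexOn ℝ s (fun y => R (y - x)) := by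
  refine ⟨hs, fun y₁ hy₁ y₂ hy₂ a b ha hb hab => ?_⟩
  have hcomb : a • y₁ + b • y₂ - x = a • (y₁ - x) + b • (y₂ - x) := by
    rw [smul_sub, smul_sub, sub_add_sub_comm, ← add_smul, hab, one_smul]
  simpa only [hcomb] using hR.2 (hst y₁ hy₁) (hst y₂ hy₂) ha hb hab

lemma le_add_of_le_add_ite_ne {α : Type*} [DecidableEq α] {C : α → ℝ} {K : ℝ} (hK : 0 ≤ K)
    {x y z : α} (hopt : C y + (if y ≠ x then K else 0) ≤ C z + (if z ≠ x then K else 0)) :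
    C y ≤ C z + K := by
  have hy : 0 ≤ (if y ≠ x then K else 0) := by split_ifs <;> simp [hK]
  have hz : (if z ≠ x then K else 0) ≤ K := by split_ifs <;> simp [hK]
  linarith

theorem stmt_15_general {N : ℕ} (n K : ℝ) (hK : 0 ≤ K)
    (W R : (Fin N → ℝ) → ℝ)
    (hWconv : ConvexOn ℝ (Delta N n) W)
    (hRconv : ConvexOn ℝ {z : Fin N → ℝ | ∑ i, z i = 0} R)
    (hRsub : ∀ a b : Fin N → ℝ, ∑ i, a i = 0 → ∑ i, b i = 0 →
      R (a + b) ≤ R a + R b)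
    (x y₁ y₂ : Fin N → ℝ)
    (hx : x ∈ Delta N n) (hy₁ : y₁ ∈ Delta N n) (hy₂ : y₂ ∈ Delta N n)
    (hopt₁ : ∀ z ∈ Delta N n,
      W y₁ + R (y₁ - x) + (if y₁ ≠ x then K else 0) ≤
        W z + R (z - x) + (if z ≠ x then K else 0))
    (hopt₂ : ∀ z ∈ Delta N n,
      W y₂ + R (y₂ - x) + (if y₂ ≠ x then K else 0) ≤
        W z + R (z - x) + (if z ≠ x then K else 0))
    (θ : ℝ) (hθ : θ ∈ Set.Ioo (0:ℝ) 1) :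
    ∀ z ∈ Delta N n,
      W (θ • y₁ + (1 - θ) • y₂) ≤ W z + R (z - (θ • y₁ + (1 - θ) • y₂)) + K := by
  intro z hz
  set yθ := θ • y₁ + (1 - θ) • y₂
  have hθ₀ : 0 ≤ θ := hθ.1.le
  have hθ₁ : 0 ≤ 1 - θ := sub_nonneg.2 hθ.2.le
  have hyθ : yθ ∈ Delta N n := convex_Delta N n hy₁ hy₂ hθ₀ hθ₁ (add_sub_cancel θ 1)
  have hcost : ConvexOn ℝ (Delta N n) (fun y => W y + R (y - x)) :=
    hWconv.add (hRconv.comp_sub_const (convex_Delta N n) x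
      fun y hy => sum_sub_eq_zero_of_mem_Delta hy hx)
  have hyθ_cost : W yθ + R (yθ - x) ≤ W z + R (z - x) + K :=
    (hcost.le_on_segment' hy₁ hy₂ hθ₀ hθ₁ (add_sub_cancel θ 1)).trans <| max_le
      (le_add_of_le_add_ite_ne (C := fun y => W y + R (y - x)) hK (hopt₁ z hz))
      (le_add_of_le_add_ite_ne (C := fun y => W y + R (y - x)) hK (hopt₂ z hz))
  have hsplit : R (z - x) ≤ R (z - yθ) + R (yθ - x) := by
    simpa only [sub_add_sub_cancel] using
      hRsub _ _ (sum_sub_eq_zero_of_mem_Delta hz hyθ) (sum_sub_eq_zero_of_mem_Delta hyθ hx)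
  linarith

/-- Convex combinations of two optimal target states for the same initial state x
lie in the no-transfer region. -/
theorem stmt_15 {N : ℕ} (n K : ℝ) (hn : 0 ≤ n) (hK : 0 ≤ K)
    (W R : (Fin N → ℝ) → ℝ)
    (hWconv : ConvexOn ℝ (Delta N n) W)
    (hWcont : ContinuousOn W (Delta N n))
    (hRconv : ConvexOn ℝ {z : Fin N → ℝ | ∑ i, z i = 0} R)
    (hRsub : ∀ a b : Fin N → ℝ, ∑ i, a i = 0 → ∑ i, b i = 0 →
      R (a + b) ≤ R a + R b)
    (hRhom : ∀ t : ℝ, 0 ≤ t → ∀ z : Fin N → ℝ, ∑ i, z i = 0 → R (t • z) = t * R z)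
    (hR0 : R 0 = 0) (hRnn : ∀ z, 0 ≤ R z)
    (x y₁ y₂ : Fin N → ℝ)
    (hx : x ∈ Delta N n) (hy₁ : y₁ ∈ Delta N n) (hy₂ : y₂ ∈ Delta N n)
    (hopt₁ : ∀ z ∈ Delta N n,
      W y₁ + R (y₁ - x) + (if y₁ ≠ x then K else 0) ≤
        W z + R (z - x) + (if z ≠ x then K else 0))
    (hopt₂ : ∀ z ∈ Delta N n,
      W y₂ + R (y₂ - x) + (if y₂ ≠ x then K else 0) ≤
        W z + R (z - x) + (if z ≠ x then K else 0))
    (θ : ℝ) (hθ : θ ∈ Set.Ioo (0:ℝ) 1) :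
    ∀ z ∈ Delta N n,
      W (θ • y₁ + (1 - θ) • y₂) ≤ W z + R (z - (θ • y₁ + (1 - θ) • y₂)) + K :=
  stmt_15_general n K hK W R hWconv hRconv hRsub x y₁ y₂ hx hy₁ hy₂ hopt₁ hopt₂ θ hθ
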